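/- Every 2×2 real symmetric positive definite matrix with determinant 1 can be written uniquely in the form [[e^W cosh V, sinh V],[sinh V, e^{-W} cosh V]] for some real numbers V and W. -/

import Mathlib

open Real

/-- Every 2×2 real symmetric positive definite matrix of determinant 1 is uniquely
of the form [[e^W cosh V, sinh V],[sinh V, e^{-W} cosh V]]. -/
theorem stmt_2 (M : Matrix (Fin 2) (Fin 2) ℝ) (hsymm : M.IsSymm) (hpos : M.PosDef)
    (hdet : M.det = 1) :
    ∃! p : ℝ × ℝ,
      M = !![exp p.2 * cosh p.1, sinh p.1; sinh p.1, exp (-p.2) * cosh p.1] := by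
  set a := M 0 0 with ha'
  set b := M 0 1 with hb'
  set c := M 1 1 with hc'
  have hsym : M 1 0 = b := by
    conv_lhs => rw [← hsymm]
    rfl
  have ha : 0 < a := by
    have := hpos.dotProduct_mulVec_pos (x := Pi.single (0 : Fin 2) (1 : ℝ)) (by
      intro h
      have := congrFun h 0
      simp [Pi.single] at this)
    simpa [dotProduct, Matrix.mulVec, Fin.sum_univ_two, Pi.single] using this
  have hdet2 : a * c - b * b = 1 := by
    rw [Matrix.det_fin_two, hsym] at hdet
    exact hdet
  have hcosh : cosh (arsinh b) = Real.sqrt (1 + b ^ 2) := Real.cosh_arsinh b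
  have hcosh2 : cosh (arsinh b) ^ 2 = a * c := by
    rw [hcosh, Real.sq_sqrt (by positivity)]
    nlinarith
  have hcoshpos : 0 < cosh (arsinh b) := Real.cosh_pos _
  set V := arsinh b with hV'
  have hsinh : sinh V = b := Real.sinh_arsinh b
  set W := Real.log (a / cosh V) with hW'
  have hexpW : exp W = a / cosh V := Real.exp_log (by positivity)
  have hexpW' : exp (-W) = c / cosh V := by
    rw [Real.exp_neg, hexpW]
    field_simp
    nlinarith
  refine ⟨(V, W), ?_, ?_⟩
  · ext i j
    fin_cases i <;> fin_cases j <;>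
      simp [hexpW, hexpW', hsinh, hsym, ← ha', ← hb', ← hc'] <;>
      field_simp
  · rintro ⟨v, w⟩ hq
    have h01 : sinh v = b := by
      have := congrFun (congrFun hq 0) 1
      simpa using this.symm
    have h00 : exp w * cosh v = a := by
      have := congrFun (congrFun hq 0) 0
      simpa using this.symm
    have hv : v = V := by
      rw [hV', ← h01, Real.arsinh_sinh]
    have hw : w = W := by
      have : exp w = a / cosh V := by
        rw [← h00, hv]
        field_simp
      have := congrArg Real.log this
      rwa [Real.log_exp, ← hW'] at this
    simp [hv, hw]
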